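/- Define u : ℍ → ℂ by u(τ) := i·β_{1/2}(−πy/6)·e^{2πiτ/24}, where τ = x + iy. Then for every τ = x + iy ∈ ℍ, 2i·y^{1/2}·conj((1/2)(∂u/∂x + i·∂u/∂y)(τ)) = (1/√6)·e^{−2πiτ/24}. (That is, ξ_{1/2} applied to i·β_{1/2}(−πy/6)·q^{1/24} equals (1/√6)·q^{−1/24}, where ξ_k f := 2i·y^k·conj(∂f/∂τ̄).) -/

import Mathlib

open Complex

/-- `β_{1/2}(−y) = 1 − (i√y/√π) ∫_0^1 t^{−1/2} e^{yt} dt` for `y > 0`: the normalized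
incomplete gamma function `Γ(1/2, −y)/Γ(1/2)` with the convention `√(−y) = i√y`. -/
noncomputable def betaHalfNeg (y : ℝ) : ℂ :=
  1 - Complex.I * (Real.sqrt y : ℂ) / (Real.sqrt Real.pi : ℂ) *
    ((∫ t in (0 : ℝ)..1, t ^ (-(1 / 2) : ℝ) * Real.exp (y * t) : ℝ) : ℂ)

/-- `u(x + iy) = i·β_{1/2}(−πy/6)·q^{1/24}` as a function of the real coordinates
`x` and `y`, where `q^{1/24} = e^{2πiτ/24}` with `τ = x + iy`. -/
noncomputable def uFun (x y : ℝ) : ℂ :=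
  Complex.I * betaHalfNeg (Real.pi * y / 6) *
    Complex.exp (2 * Real.pi * Complex.I * ((x : ℂ) + (y : ℂ) * Complex.I) / 24)

/-!
The factor `q^{1/24}` is holomorphic, so `∂/∂τ̄` only sees the `y`-dependence of
`β_{1/2}(−πy/6)`. The substitution `s = wt` turns `√w ∫_0^1 t^{−1/2} e^{wt} dt` into
`∫_0^w s^{−1/2} e^s ds`, whose derivative is `w^{−1/2} e^w`; at `w = πy/6` the factor `e^{πy/6}`
turns `conj(q^{1/24})` into `q^{−1/24}`, and the powers of `π` and `y` cancel against `2√y`.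
-/

/-- The Wirtinger derivative `∂f/∂τ̄` at `τ = x + iy`. -/
noncomputable def delBar (f : ℝ → ℝ → ℂ) (x y : ℝ) : ℂ :=
  (1 / 2 : ℂ) * (deriv (fun x' : ℝ => f x' y) x + I * deriv (fun y' : ℝ => f x y') y)

lemma mul_integral_rpow_mul_comp_mul (s : ℝ) (f : ℝ → ℝ) {w : ℝ} (hw : 0 < w) :
    w ^ (s + 1) * ∫ t in (0 : ℝ)..1, t ^ s * f (w * t) = ∫ u in (0 : ℝ)..w, u ^ s * f u := by
  have hscale := intervalIntegral.integral_comp_mul_left (fun u => u ^ s * f u) hw.ne'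
    (a := 0) (b := 1)
  simp only [mul_zero, mul_one, smul_eq_mul] at hscale
  have hsplit : (∫ t in (0 : ℝ)..1, (w * t) ^ s * f (w * t)) =
      w ^ s * ∫ t in (0 : ℝ)..1, t ^ s * f (w * t) := by
    rw [← intervalIntegral.integral_const_mul]
    refine intervalIntegral.integral_congr fun t ht => ?_
    rw [Set.uIcc_of_le zero_le_one] at ht
    rw [Real.mul_rpow hw.le ht.1, mul_assoc]
  rw [Real.rpow_add_one hw.ne', mul_comm _ w, mul_assoc, ← hsplit, hscale, ← mul_assoc,
    mul_inv_cancel₀ hw.ne', one_mul]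

lemma hasDerivAt_integral_rpow_mul {s : ℝ} (hs : -1 < s) {f : ℝ → ℝ} (hf : Continuous f)
    {w : ℝ} (hw : 0 < w) :
    HasDerivAt (fun v => ∫ u in (0 : ℝ)..v, u ^ s * f u) (w ^ s * f w) w := by
  have hcont : ContinuousOn (fun u : ℝ => u ^ s * f u) (Set.Ioi 0) :=
    (continuousOn_id.rpow_const fun u hu => Or.inl (ne_of_gt hu)).mul hf.continuousOn
  exact intervalIntegral.integral_hasDerivAt_right
    ((intervalIntegral.intervalIntegrable_rpow' hs).mul_continuousOn hf.continuousOn)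
    (hcont.stronglyMeasurableAtFilter isOpen_Ioi w hw)
    (hcont.continuousAt (Ioi_mem_nhds hw))

lemma betaHalfNeg_eq_integral {w : ℝ} (hw : 0 < w) :
    betaHalfNeg w = 1 - I / (Real.sqrt Real.pi : ℂ) *
      ((∫ u in (0 : ℝ)..w, u ^ (-(1 / 2) : ℝ) * Real.exp u : ℝ) : ℂ) := by
  rw [betaHalfNeg, ← mul_integral_rpow_mul_comp_mul _ _ hw, Real.sqrt_eq_rpow]
  push_cast
  norm_num
  ring

lemma hasDerivAt_betaHalfNeg {w : ℝ} (hw : 0 < w) :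
    HasDerivAt betaHalfNeg
      (-(I / (Real.sqrt Real.pi : ℂ)) * ((w ^ (-(1 / 2) : ℝ) * Real.exp w : ℝ) : ℂ)) w := by
  have hH := (hasDerivAt_integral_rpow_mul (by norm_num : (-1 : ℝ) < -(1 / 2))
    Real.continuous_exp hw).ofReal_comp
  have h := (hH.const_mul (I / (Real.sqrt Real.pi : ℂ))).const_sub 1
  rw [← neg_mul] at h
  refine h.congr_of_eventuallyEq ?_
  filter_upwards [eventually_gt_nhds hw] with v hv
  exact betaHalfNeg_eq_integral hv

/-- A holomorphic factor is invisible to `∂/∂τ̄`. -/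
lemma delBar_mul_cexp {g : ℝ → ℂ} {g' : ℂ} {y : ℝ} (hg : HasDerivAt g g' y) (c : ℂ) (x : ℝ) :
    delBar (fun x' y' => g y' * cexp (c * ((x' : ℂ) + (y' : ℂ) * I))) x y =
      I / 2 * g' * cexp (c * ((x : ℂ) + (y : ℂ) * I)) := by
  have hx : HasDerivAt (fun x' : ℝ => c * ((x' : ℂ) + (y : ℂ) * I)) c x := by
    simpa using ((hasDerivAt_id x).ofReal_comp.add_const ((y : ℂ) * I)).const_mul c
  have hy : HasDerivAt (fun y' : ℝ => c * ((x : ℂ) + (y' : ℂ) * I)) (c * I) y := by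
    simpa using (((hasDerivAt_id y).ofReal_comp.mul_const I).const_add (x : ℂ)).const_mul c
  have hxu := hx.cexp.const_mul (g y)
  have hyu : HasDerivAt (fun y' : ℝ => g y' * cexp (c * ((x : ℂ) + (y' : ℂ) * I)))
      (g' * cexp (c * ((x : ℂ) + (y : ℂ) * I)) +
        g y * (cexp (c * ((x : ℂ) + (y : ℂ) * I)) * (c * I))) y :=
    hg.mul hy.cexp
  rw [delBar, hxu.deriv, hyu.deriv]
  linear_combination ((1 / 2) * g y * cexp (c * ((x : ℂ) + (y : ℂ) * I)) * c) *
    I_sq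

lemma conj_cexp_mul_exp (x y : ℝ) :
    (starRingEnd ℂ) (cexp (2 * Real.pi * I * ((x : ℂ) + (y : ℂ) * I) / 24)) *
        (Real.exp (Real.pi * y / 6) : ℂ) =
      cexp (-(2 * Real.pi * I * ((x : ℂ) + (y : ℂ) * I)) / 24) := by
  rw [← Complex.exp_conj, Complex.ofReal_exp, ← Complex.exp_add]
  congr 1
  simp only [map_div₀, map_mul, map_add, map_ofNat, Complex.conj_I, Complex.conj_ofReal]
  push_cast
  linear_combination ((Real.pi : ℂ) * (y : ℂ) / 6) * I_sq

lemma delBar_uFun {x y : ℝ} (hy : 0 < y) :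
    delBar uFun x y = I * Real.sqrt Real.pi / 12 *
      (((Real.pi * y / 6) ^ (-(1 / 2) : ℝ) * Real.exp (Real.pi * y / 6) : ℝ) : ℂ) *
      cexp (2 * Real.pi * I * ((x : ℂ) + (y : ℂ) * I) / 24) := by
  have hw : 0 < Real.pi * y / 6 := by positivity
  have hlin : HasDerivAt (fun y' : ℝ => Real.pi * y' / 6) (Real.pi / 6) y := by
    simpa using ((hasDerivAt_id y).const_mul Real.pi).div_const 6
  have hg := ((hasDerivAt_betaHalfNeg hw).scomp y hlin).const_mul I
  have hu : uFun = fun (x' : ℝ) y' => I * betaHalfNeg (Real.pi * y' / 6) *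
      cexp (2 * Real.pi * I / 24 * ((x' : ℂ) + (y' : ℂ) * I)) := by
    ext x' y'
    rw [uFun]
    congr 2
    ring
  rw [hu, delBar_mul_cexp (g := fun y' => I * betaHalfNeg (Real.pi * y' / 6)) hg]
  have hpi : (Real.sqrt Real.pi : ℂ) ^ 2 = Real.pi := by
    exact_mod_cast Real.sq_sqrt Real.pi_pos.le
  have hpi0 : (Real.sqrt Real.pi : ℂ) ≠ 0 := by exact_mod_cast (Real.sqrt_pos.2 Real.pi_pos).ne'
  rw [Complex.real_smul]
  field_simp
  push_cast
  linear_combination (-2 * (Real.pi : ℂ)) * I_sq - 2 * hpi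

theorem xi_half_of_beta_term (x y : ℝ) (hy : 0 < y) :
    2 * Complex.I * ((Real.sqrt y : ℝ) : ℂ) *
        (starRingEnd ℂ) ((1 / 2 : ℂ) *
          (deriv (fun x' : ℝ => uFun x' y) x + Complex.I * deriv (fun y' : ℝ => uFun x y') y)) =
      (1 / (Real.sqrt 6 : ℂ)) *
        Complex.exp (-(2 * Real.pi * Complex.I * ((x : ℂ) + (y : ℂ) * Complex.I)) / 24) := by
  have hrpow : (Real.pi * y / 6) ^ (-(1 / 2) : ℝ) =
      Real.sqrt 6 / (Real.sqrt Real.pi * Real.sqrt y) := by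
    rw [Real.rpow_neg (by positivity), ← Real.sqrt_eq_rpow, Real.sqrt_div (by positivity),
      Real.sqrt_mul Real.pi_pos.le, inv_div]
  have h6 : (Real.sqrt 6 : ℂ) ^ 2 = 6 := by exact_mod_cast Real.sq_sqrt (by norm_num : (0 : ℝ) ≤ 6)
  have h6' : (Real.sqrt 6 : ℂ) ≠ 0 := by
    exact_mod_cast (Real.sqrt_pos.2 (by norm_num : (0 : ℝ) < 6)).ne'
  have hy' : (Real.sqrt y : ℂ) ≠ 0 := by exact_mod_cast (Real.sqrt_pos.2 hy).ne'
  change 2 * I * (Real.sqrt y : ℂ) * (starRingEnd ℂ) (delBar uFun x y) = _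
  rw [delBar_uFun hy, hrpow, ← conj_cexp_mul_exp]
  simp only [map_mul, map_div₀, Complex.conj_I, Complex.conj_ofReal, map_ofNat]
  push_cast
  field_simp
  linear_combination (-12) * I_sq - 2 * I ^ 2 * h6
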